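/- arXiv:2602.22672 — 2 statements merged into one kernel-verified Lean document; each statement's English description precedes it below -/
import Mathlib

section
/- Let α, β, γ ∈ ℝ and let U, V : ℝ → ℝ be twice continuously differentiable even functions satisfying -U''(r) + U(r) = α·U(r)³ + β·U(r)·V(r)² and -V''(r) + V(r) = γ·V(r)³ + β·U(r)²·V(r) for all r ∈ ℝ, and suppose there exist constants C, η > 0 such that |U(r)| + |U'(r)| + |V(r)| + |V'(r)| ≤ C·e^{-η|r|} for all r ∈ ℝ. Then ∫₀^∞ (U(r)² + V(r)²) dr = (3/4)·∫₀^∞ (α·U(r)⁴ + γ·V(r)⁴ + 2β·U(r)²·V(r)²) dr. -/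
/-!
Multiplying the equations by `U'` and `V'` shows that the energy
`U'² + V'² - U² - V² + α/2 U⁴ + γ/2 V⁴ + β U²V²` is constant along solutions, hence zero, since
everything decays at infinity. Multiplying them instead by `U` and `V` and using the vanishing
energy, the derivative of `U U' + V V'` is `2 (U² + V²) - 3/2 (α U⁴ + γ V⁴ + 2β U²V²)`.
The function `U U' + V V'` vanishes at infinity, and at `0` because `U' 0 = V' 0 = 0` by evenness,
so integrating its derivative over `(0, ∞)` gives the identity.
-/

open MeasureTheory Filter Real Topology Asymptotics Set

lemma Function.Even.deriv_zero {F : Type*} [NormedAddCommGroup F] [NormedSpace ℝ F]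
    {f : ℝ → F} (hf : f.Even) : deriv f 0 = 0 := by
  have h : deriv f 0 = -deriv f 0 := by
    simpa [funext hf] using deriv_comp_neg f (0 : ℝ)
  simpa [eq_neg_iff_add_eq_zero, ← two_smul ℝ] using h

lemma eq_zero_of_hasDerivAt_zero_of_tendsto {F : Type*} [NormedAddCommGroup F]
    [NormedSpace ℝ F] {f : ℝ → F} (hf : ∀ x, HasDerivAt f 0 x)
    (hlim : Tendsto f atTop (𝓝 0)) (x : ℝ) : f x = 0 := by
  have hconst : f = fun _ ↦ f x :=
    funext fun y ↦ is_const_of_deriv_eq_zero (fun z ↦ (hf z).differentiableAt)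
      (fun z ↦ (hf z).deriv) y x
  rw [hconst] at hlim
  exact tendsto_nhds_unique tendsto_const_nhds hlim

lemma tendsto_exp_neg_mul_atTop {η : ℝ} (hη : 0 < η) :
    Tendsto (fun r ↦ exp (-η * r)) atTop (𝓝 0) :=
  tendsto_exp_atBot.comp (tendsto_id.const_mul_atTop_of_neg (neg_neg_iff_pos.2 hη))

lemma isBigO_exp_neg_of_abs_le {f : ℝ → ℝ} {C η : ℝ}
    (h : ∀ r, |f r| ≤ C * exp (-η * |r|)) : f =O[atTop] fun r ↦ exp (-η * r) := by
  refine IsBigO.of_bound C ?_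
  filter_upwards [eventually_ge_atTop 0] with r hr
  simpa [abs_of_nonneg hr] using h r

lemma integrableOn_Ioi_mul_of_isBigO_exp_neg {f g : ℝ → ℝ} {η a c : ℝ} (hη : 0 < η)
    (hf : Continuous f) (hg : Continuous g) (hfO : f =O[atTop] fun r ↦ exp (-η * r))
    (hgc : Tendsto g atTop (𝓝 c)) : IntegrableOn (fun r ↦ f r * g r) (Ioi a) := by
  refine integrable_of_isBigO_exp_neg hη (hf.mul hg).continuousOn ?_
  simpa using hfO.mul (hgc.isBigO_one ℝ)

section CoupledSystem

variable {α β γ η a : ℝ} {U V : ℝ → ℝ}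

noncomputable def systemEnergy (α β γ : ℝ) (U V : ℝ → ℝ) (r : ℝ) : ℝ :=
  deriv U r ^ 2 + deriv V r ^ 2 - U r ^ 2 - V r ^ 2
    + α / 2 * U r ^ 4 + γ / 2 * V r ^ 4 + β * U r ^ 2 * V r ^ 2

lemma hasDerivAt_systemEnergy (hU : Differentiable ℝ U) (hU' : Differentiable ℝ (deriv U))
    (hV : Differentiable ℝ V) (hV' : Differentiable ℝ (deriv V))
    (hUode : ∀ r, -deriv (deriv U) r + U r = α * U r ^ 3 + β * U r * V r ^ 2)
    (hVode : ∀ r, -deriv (deriv V) r + V r = γ * V r ^ 3 + β * U r ^ 2 * V r) (r : ℝ) :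
    HasDerivAt (systemEnergy α β γ U V) 0 r := by
  have hu := (hU r).hasDerivAt
  have hv := (hV r).hasDerivAt
  have h := (((((((hU' r).hasDerivAt.pow 2).add ((hV' r).hasDerivAt.pow 2)).sub (hu.pow 2)).sub
    (hv.pow 2)).add ((hu.pow 4).const_mul (α / 2))).add ((hv.pow 4).const_mul (γ / 2))).add
    (((hu.pow 2).const_mul β).mul (hv.pow 2))
  refine h.congr_deriv ?_
  simp only [Pi.pow_apply]
  linear_combination -2 * deriv U r * hUode r - 2 * deriv V r * hVode r

lemma systemEnergy_eq_zero (hU : Differentiable ℝ U) (hU' : Differentiable ℝ (deriv U))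
    (hV : Differentiable ℝ V) (hV' : Differentiable ℝ (deriv V))
    (hUode : ∀ r, -deriv (deriv U) r + U r = α * U r ^ 3 + β * U r * V r ^ 2)
    (hVode : ∀ r, -deriv (deriv V) r + V r = γ * V r ^ 3 + β * U r ^ 2 * V r)
    (hU0 : Tendsto U atTop (𝓝 0)) (hU'0 : Tendsto (deriv U) atTop (𝓝 0))
    (hV0 : Tendsto V atTop (𝓝 0)) (hV'0 : Tendsto (deriv V) atTop (𝓝 0)) (r : ℝ) :
    systemEnergy α β γ U V r = 0 := by
  refine eq_zero_of_hasDerivAt_zero_of_tendsto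
    (hasDerivAt_systemEnergy hU hU' hV hV' hUode hVode) ?_ r
  convert ((((((hU'0.pow 2).add (hV'0.pow 2)).sub (hU0.pow 2)).sub (hV0.pow 2)).add
    ((hU0.pow 4).const_mul (α / 2))).add ((hV0.pow 4).const_mul (γ / 2))).add
    (((hU0.pow 2).const_mul β).mul (hV0.pow 2)) using 2 <;> simp [systemEnergy]

lemma hasDerivAt_virial (hU : Differentiable ℝ U) (hU' : Differentiable ℝ (deriv U))
    (hV : Differentiable ℝ V) (hV' : Differentiable ℝ (deriv V)) {r : ℝ}
    (hUode : -deriv (deriv U) r + U r = α * U r ^ 3 + β * U r * V r ^ 2)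
    (hVode : -deriv (deriv V) r + V r = γ * V r ^ 3 + β * U r ^ 2 * V r)
    (hE : systemEnergy α β γ U V r = 0) :
    HasDerivAt (fun x ↦ U x * deriv U x + V x * deriv V x)
      (2 * (U r ^ 2 + V r ^ 2)
        - 3 / 2 * (α * U r ^ 4 + γ * V r ^ 4 + 2 * β * U r ^ 2 * V r ^ 2)) r := by
  refine (((hU r).hasDerivAt.mul (hU' r).hasDerivAt).add
    ((hV r).hasDerivAt.mul (hV' r).hasDerivAt)).congr_deriv ?_
  unfold systemEnergy at hE
  linear_combination -U r * hUode - V r * hVode + hE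

lemma integrableOn_Ioi_sq_add_sq (hη : 0 < η) (hU : Continuous U) (hV : Continuous V)
    (hUO : U =O[atTop] fun r ↦ exp (-η * r)) (hVO : V =O[atTop] fun r ↦ exp (-η * r)) :
    IntegrableOn (fun r ↦ U r ^ 2 + V r ^ 2) (Ioi a) := by
  have hU0 := hUO.trans_tendsto (tendsto_exp_neg_mul_atTop hη)
  have hV0 := hVO.trans_tendsto (tendsto_exp_neg_mul_atTop hη)
  exact ((integrableOn_Ioi_mul_of_isBigO_exp_neg hη hU hU hUO hU0).add
    (integrableOn_Ioi_mul_of_isBigO_exp_neg hη hV hV hVO hV0)).congr_fun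
    (fun r _ ↦ by simp only [Pi.add_apply]; ring) measurableSet_Ioi

lemma integrableOn_Ioi_quartic (hη : 0 < η) (hU : Continuous U) (hV : Continuous V)
    (hUO : U =O[atTop] fun r ↦ exp (-η * r)) (hVO : V =O[atTop] fun r ↦ exp (-η * r)) :
    IntegrableOn (fun r ↦ α * U r ^ 4 + γ * V r ^ 4 + 2 * β * U r ^ 2 * V r ^ 2) (Ioi a) := by
  have hU0 := hUO.trans_tendsto (tendsto_exp_neg_mul_atTop hη)
  have hV0 := hVO.trans_tendsto (tendsto_exp_neg_mul_atTop hη)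
  have hUterm := integrableOn_Ioi_mul_of_isBigO_exp_neg (a := a) hη hU
    (g := fun r ↦ α * U r ^ 3 + 2 * β * U r * V r ^ 2) (by fun_prop) hUO
    (((hU0.pow 3).const_mul α).add ((hU0.const_mul (2 * β)).mul (hV0.pow 2)))
  have hVterm := integrableOn_Ioi_mul_of_isBigO_exp_neg (a := a) hη hV
    (g := fun r ↦ γ * V r ^ 3) (by fun_prop) hVO ((hV0.pow 3).const_mul γ)
  exact (hUterm.add hVterm).congr_fun (fun r _ ↦ by simp only [Pi.add_apply]; ring)
    measurableSet_Ioi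

end CoupledSystem

theorem pohozaev_system_1 (α β γ : ℝ) (U V : ℝ → ℝ)
    (hU : ContDiff ℝ 2 U) (hV : ContDiff ℝ 2 V)
    (hUeven : ∀ r : ℝ, U (-r) = U r) (hVeven : ∀ r : ℝ, V (-r) = V r)
    (hUode : ∀ r : ℝ, -(deriv (deriv U) r) + U r
      = α * (U r) ^ 3 + β * U r * (V r) ^ 2)
    (hVode : ∀ r : ℝ, -(deriv (deriv V) r) + V r
      = γ * (V r) ^ 3 + β * (U r) ^ 2 * V r)
    (hdecay : ∃ C > (0:ℝ), ∃ η > (0:ℝ), ∀ r : ℝ,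
      |U r| + |deriv U r| + |V r| + |deriv V r| ≤ C * Real.exp (-η * |r|)) :
    (∫ r in Set.Ioi (0:ℝ), ((U r) ^ 2 + (V r) ^ 2))
      = (3 / 4) * ∫ r in Set.Ioi (0:ℝ),
          (α * (U r) ^ 4 + γ * (V r) ^ 4 + 2 * β * (U r) ^ 2 * (V r) ^ 2) := by
  obtain ⟨C, -, η, hη, hdecay⟩ := hdecay
  obtain ⟨hUO, hU'O, hVO, hV'O⟩ : (U =O[atTop] fun r ↦ exp (-η * r)) ∧
      (deriv U =O[atTop] fun r ↦ exp (-η * r)) ∧ (V =O[atTop] fun r ↦ exp (-η * r)) ∧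
      (deriv V =O[atTop] fun r ↦ exp (-η * r)) := by
    refine ⟨?_, ?_, ?_, ?_⟩ <;> refine isBigO_exp_neg_of_abs_le (C := C) fun r ↦ ?_ <;>
      linarith [hdecay r, abs_nonneg (U r), abs_nonneg (deriv U r), abs_nonneg (V r),
        abs_nonneg (deriv V r)]
  have hexp := tendsto_exp_neg_mul_atTop hη
  have hU1 := hU.differentiable two_ne_zero
  have hV1 := hV.differentiable two_ne_zero
  have hU2 := hU.differentiable_deriv_two
  have hV2 := hV.differentiable_deriv_two
  have hE := systemEnergy_eq_zero hU1 hU2 hV1 hV2 hUode hVode (hUO.trans_tendsto hexp)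
    (hU'O.trans_tendsto hexp) (hVO.trans_tendsto hexp) (hV'O.trans_tendsto hexp)
  have hint₁ := integrableOn_Ioi_sq_add_sq (a := 0) hη hU.continuous hV.continuous hUO hVO
  have hint₂ := integrableOn_Ioi_quartic (a := 0) (α := α) (β := β) (γ := γ) hη hU.continuous
    hV.continuous hUO hVO
  have hvirial r := hasDerivAt_virial hU1 hU2 hV1 hV2 (hUode r) (hVode r) (hE r)
  have hlim : Tendsto (fun r ↦ U r * deriv U r + V r * deriv V r) atTop (𝓝 0) := by
    simpa using ((hUO.trans_tendsto hexp).mul (hU'O.trans_tendsto hexp)).add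
      ((hVO.trans_tendsto hexp).mul (hV'O.trans_tendsto hexp))
  have hftc := integral_Ioi_of_hasDerivAt_of_tendsto (hvirial 0).continuousAt.continuousWithinAt
    (fun r _ ↦ hvirial r) ((hint₁.const_mul 2).sub (hint₂.const_mul (3 / 2))) hlim
  rw [integral_sub (hint₁.const_mul 2) (hint₂.const_mul (3 / 2)), integral_const_mul,
    integral_const_mul, Function.Even.deriv_zero hUeven, Function.Even.deriv_zero hVeven] at hftc
  linarith
end

section
/- Let λ, α, β, γ ∈ ℝ, let P, Q : [0,∞) → ℝ be continuously differentiable with P, Q, P', Q' bounded, and let u, v : [0,∞) → ℝ be twice continuously differentiable functions with u'(0) = v'(0) = 0, satisfying -u''(r) - u'(r)/r + (λ + P(r))·u(r) = α·u(r)³ + β·u(r)·v(r)² and -v''(r) - v'(r)/r + (λ + Q(r))·v(r) = γ·v(r)³ + β·u(r)²·v(r) for all r > 0, and suppose there exist constants C, η > 0 such that |u(r)| + |u'(r)| + |v(r)| + |v'(r)| ≤ C·e^{-ηr} for all r ≥ 0. Then 2·∫₀^∞ r·(λ + P(r))·u(r)² dr = α·∫₀^∞ r·u(r)⁴ dr -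 ∫₀^∞ r²·P'(r)·u(r)² dr - β·∫₀^∞ r²·2·u(r)·u'(r)·v(r)² dr. -/
/-!
Multiplying the radial equation by `r² u'` (Pohozaev's multiplier) shows that
`A(r) = r² ((λ + P) u² - u'² - α u⁴ / 2)` has derivative
`2 r (λ + P) u² + r² P' u² - α r u⁴ + 2 r² u' (β u v²)` for `r > 0`.
Exponential decay of `u, u', v` makes every term integrable on `(0, ∞)` and forces `A → 0`
both as `r → 0⁺` (thanks to the factor `r²`) and as `r → ∞`, so the integral of `A'` vanishes.
-/

open MeasureTheory Real Set Filter Topology Asymptotics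

def IsExpDecaying (f : ℝ → ℝ) : Prop :=
  ∃ c > 0, f =O[𝓟 (Ici 0)] fun x => exp (-c * x)

lemma isBigO_exp_neg_mul_of_le {b c : ℝ} (hbc : b ≤ c) :
    (fun x => exp (-c * x)) =O[𝓟 (Ici 0)] fun x => exp (-b * x) :=
  IsBigO.of_bound' <| eventually_principal.2 fun x (hx : 0 ≤ x) => by
    simp only [norm_eq_abs, abs_exp]
    exact exp_le_exp.2 (by nlinarith)

namespace IsExpDecaying

variable {f g b : ℝ → ℝ}

lemma of_abs_le {C η : ℝ} (hη : 0 < η) (h : ∀ x ≥ 0, |f x| ≤ C * exp (-η * x)) :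
    IsExpDecaying f :=
  ⟨η, hη, IsBigO.of_bound C <| eventually_principal.2 fun x hx => by
    simpa [abs_exp] using h x hx⟩

lemma isBigO_one (hf : IsExpDecaying f) : f =O[𝓟 (Ici 0)] fun _ => (1 : ℝ) :=
  let ⟨_, hc, hf⟩ := hf; hf.trans (by simpa using isBigO_exp_neg_mul_of_le hc.le)

lemma mul (hf : IsExpDecaying f) (hg : IsExpDecaying g) : IsExpDecaying (f * g) := by
  obtain ⟨b, hb, hf⟩ := hf
  obtain ⟨c, hc, hg⟩ := hg
  refine ⟨b + c, by positivity, (hf.mul hg).congr_right fun x => ?_⟩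
  rw [← exp_add]; ring_nf

lemma bounded_mul (hb : b =O[𝓟 (Ici 0)] fun _ => (1 : ℝ)) (hf : IsExpDecaying f) :
    IsExpDecaying (b * f) :=
  let ⟨c, hc, hf⟩ := hf; ⟨c, hc, (hb.mul hf).congr_right fun _ => one_mul _⟩

lemma pow (hf : IsExpDecaying f) {n : ℕ} (hn : n ≠ 0) : IsExpDecaying (f ^ n) := by
  induction n with
  | zero => exact absurd rfl hn
  | succ k ih =>
    rcases eq_or_ne k 0 with rfl | hk
    · simpa using hf
    · simpa [pow_succ] using (ih hk).mul hf

lemma const_mul (hf : IsExpDecaying f) (a : ℝ) : IsExpDecaying fun x => a * f x :=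
  let ⟨c, hc, hf⟩ := hf; ⟨c, hc, hf.const_mul_left a⟩

lemma sub (hf : IsExpDecaying f) (hg : IsExpDecaying g) : IsExpDecaying (f - g) := by
  obtain ⟨b, hb, hf⟩ := hf
  obtain ⟨c, hc, hg⟩ := hg
  exact ⟨min b c, lt_min hb hc, (hf.trans (isBigO_exp_neg_mul_of_le (min_le_left b c))).sub
    (hg.trans (isBigO_exp_neg_mul_of_le (min_le_right b c)))⟩

lemma integrableOn_pow_mul (hf : IsExpDecaying f) (hcont : ContinuousOn f (Ioi 0)) (n : ℕ) :
    IntegrableOn (fun x => x ^ n * f x) (Ioi 0) := by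
  obtain ⟨c, hc, hf⟩ := hf
  obtain ⟨K, hK⟩ := isBigO_principal.1 hf
  have hint : IntegrableOn (fun x : ℝ => x ^ (n : ℝ) * exp (-c * x ^ (1 : ℝ))) (Ioi 0) :=
    integrableOn_rpow_mul_exp_neg_mul_rpow (by linarith [n.cast_nonneg (α := ℝ)]) one_pos hc
  refine (hint.const_mul K).mono' ((continuousOn_id.pow n).mul hcont |>.aestronglyMeasurable
    measurableSet_Ioi) ((ae_restrict_iff' measurableSet_Ioi).2 (.of_forall fun x hx => ?_))
  have hx : 0 ≤ x := le_of_lt hx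
  have := hK x (mem_Ici.2 hx)
  simp only [norm_eq_abs, abs_exp, norm_mul, norm_pow, abs_of_nonneg hx, rpow_one,
    rpow_natCast] at this ⊢
  calc x ^ n * |f x| ≤ x ^ n * (K * exp (-c * x)) := by gcongr
    _ = K * (x ^ n * exp (-c * x)) := by ring

lemma tendsto_pow_mul_atTop (hf : IsExpDecaying f) (n : ℕ) :
    Tendsto (fun x => x ^ n * f x) atTop (𝓝 0) := by
  obtain ⟨c, hc, hf⟩ := hf
  have hlim := tendsto_rpow_mul_exp_neg_mul_atTop_nhds_zero n c hc
  simp only [rpow_natCast] at hlim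
  exact ((isBigO_refl (fun x : ℝ => x ^ n) atTop).mul
    (hf.mono (le_principal_iff.2 (Ici_mem_atTop 0)))).trans_tendsto hlim

lemma tendsto_pow_mul_nhdsWithin_zero (hf : IsExpDecaying f) {n : ℕ} (hn : n ≠ 0) :
    Tendsto (fun x => x ^ n * f x) (𝓝[Ici 0] 0) (𝓝 0) := by
  have hlim : Tendsto (fun x : ℝ => x ^ n * 1) (𝓝[Ici 0] 0) (𝓝 0) := by
    simpa [zero_pow hn] using
      ((continuous_pow n).tendsto (0 : ℝ)).mono_left nhdsWithin_le_nhds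
  have hbdd : f =O[𝓝[Ici 0] 0] fun _ => (1 : ℝ) := hf.isBigO_one.mono inf_le_right
  exact ((isBigO_refl (fun x : ℝ => x ^ n) _).mul hbdd).trans_tendsto hlim

lemma integral_eq_zero_of_hasDerivAt_pow_mul (hf : IsExpDecaying f) {n : ℕ} (hn : n ≠ 0)
    (hderiv : ∀ x ∈ Ioi 0, HasDerivAt (fun x => x ^ n * f x) (g x) x)
    (hg : IntegrableOn g (Ioi 0)) :
    ∫ x in Ioi 0, g x = 0 := by
  have h0 : (0 : ℝ) ^ n * f 0 = 0 := by simp [zero_pow hn]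
  have hcont : ContinuousWithinAt (fun x => x ^ n * f x) (Ici 0) 0 := by
    rw [ContinuousWithinAt, h0]
    exact hf.tendsto_pow_mul_nhdsWithin_zero hn
  simpa [h0] using integral_Ioi_of_hasDerivAt_of_tendsto hcont hderiv hg
    (hf.tendsto_pow_mul_atTop n)

end IsExpDecaying

lemma hasDerivAt_radial_pohozaev {u u' V : ℝ → ℝ} {u'' V' α x : ℝ} (hx : x ≠ 0)
    (hu : HasDerivAt u (u' x) x) (hu' : HasDerivAt u' u'' x) (hV : HasDerivAt V V' x) :
    HasDerivAt (fun r => r ^ 2 * (V r * u r ^ 2 - u' r ^ 2 - α / 2 * u r ^ 4))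
      (2 * x * V x * u x ^ 2 + x ^ 2 * V' * u x ^ 2 - α * x * u x ^ 4
        + 2 * x ^ 2 * u' x * (-u'' - u' x / x + V x * u x - α * u x ^ 3)) x := by
  refine ((hasDerivAt_pow 2 x).mul (((hV.mul (hu.pow 2)).sub (hu'.pow 2)).sub
    ((hu.pow 4).const_mul (α / 2)))).congr_deriv ?_
  simp only [Pi.mul_apply, Pi.sub_apply, Pi.pow_apply]
  field_simp
  ring

section RadialEquation

variable {u V h : ℝ → ℝ} {α : ℝ}

lemma continuousOn_of_radial_eq (hu : ContDiffOn ℝ 2 u (Ioi 0)) (hV : ContinuousOn V (Ioi 0))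
    (heq : ∀ r > 0, -deriv (deriv u) r - deriv u r / r + V r * u r = α * u r ^ 3 + h r) :
    ContinuousOn h (Ioi 0) := by
  have hu' : ContDiffOn ℝ 1 (deriv u) (Ioi 0) := hu.deriv_of_isOpen isOpen_Ioi (by norm_num)
  have hu'' := hu'.continuousOn_deriv_of_isOpen isOpen_Ioi le_rfl
  have hdiv : ContinuousOn (fun r => deriv u r / r) (Ioi 0) :=
    hu'.continuousOn.div continuousOn_id fun r hr => ne_of_gt hr
  have huc := hu.continuousOn
  refine ContinuousOn.congr (f := fun r => -deriv (deriv u) r - deriv u r / r + V r * u r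
    - α * u r ^ 3) (by fun_prop) fun r hr => ?_
  linarith [heq r hr]

lemma hasDerivAt_pohozaev_of_radial_eq (hu : ContDiffOn ℝ 2 u (Ioi 0))
    (hV : ContDiffOn ℝ 1 V (Ioi 0))
    (heq : ∀ r > 0, -deriv (deriv u) r - deriv u r / r + V r * u r = α * u r ^ 3 + h r)
    {x : ℝ} (hx : 0 < x) :
    HasDerivAt (fun r => r ^ 2 * (V r * u r ^ 2 - deriv u r ^ 2 - α / 2 * u r ^ 4))
      (2 * (x * V x * u x ^ 2) + x ^ 2 * deriv V x * u x ^ 2 - α * (x * u x ^ 4)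
        + 2 * (x ^ 2 * deriv u x * h x)) x := by
  have hu' : ContDiffOn ℝ 1 (deriv u) (Ioi 0) := hu.deriv_of_isOpen isOpen_Ioi (by norm_num)
  have hx' : Ioi 0 ∈ 𝓝 x := isOpen_Ioi.mem_nhds hx
  refine (hasDerivAt_radial_pohozaev hx.ne' ((hu.differentiableOn two_ne_zero).hasDerivAt hx')
    ((hu'.differentiableOn one_ne_zero).hasDerivAt hx')
    ((hV.differentiableOn one_ne_zero).hasDerivAt hx')).congr_deriv ?_
  rw [show -deriv (deriv u) x - deriv u x / x + V x * u x - α * u x ^ 3 = h x by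
    linarith [heq x hx]]
  ring

theorem integral_radial_pohozaev (hu : ContDiffOn ℝ 2 u (Ioi 0)) (hV : ContDiffOn ℝ 1 V (Ioi 0))
    (hVb : V =O[𝓟 (Ici 0)] fun _ => (1 : ℝ)) (hV'b : deriv V =O[𝓟 (Ici 0)] fun _ => (1 : ℝ))
    (hhb : h =O[𝓟 (Ici 0)] fun _ => (1 : ℝ))
    (hu_dec : IsExpDecaying u) (hu'_dec : IsExpDecaying (deriv u))
    (heq : ∀ r > 0, -deriv (deriv u) r - deriv u r / r + V r * u r = α * u r ^ 3 + h r) :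
    2 * ∫ r in Ioi 0, r * V r * u r ^ 2
      = α * (∫ r in Ioi 0, r * u r ^ 4) - (∫ r in Ioi 0, r ^ 2 * deriv V r * u r ^ 2)
        - 2 * ∫ r in Ioi 0, r ^ 2 * deriv u r * h r := by
  have integrable {f : ℝ → ℝ} (hf : IsExpDecaying f) (hc : ContinuousOn f (Ioi 0)) (n : ℕ)
      {F : ℝ → ℝ} (hF : ∀ x, F x = x ^ n * f x) : IntegrableOn F (Ioi 0) := by
    simpa only [← funext hF] using hf.integrableOn_pow_mul hc n
  have huc := hu.continuousOn
  have i₁ := integrable ((hu_dec.pow two_ne_zero).bounded_mul hVb) (hV.continuousOn.mul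
    (huc.pow 2)) 1 (F := fun r => r * V r * u r ^ 2) fun x => by
    simp only [Pi.mul_apply, Pi.pow_apply]; ring
  have i₂ := integrable ((hu_dec.pow two_ne_zero).bounded_mul hV'b)
    ((hV.continuousOn_deriv_of_isOpen isOpen_Ioi le_rfl).mul (huc.pow 2)) 2
    (F := fun r => r ^ 2 * deriv V r * u r ^ 2) fun x => by
    simp only [Pi.mul_apply, Pi.pow_apply]; ring
  have i₃ := integrable (hu_dec.pow four_ne_zero) (huc.pow 4) 1
    (F := fun r => r * u r ^ 4) fun x => by simp only [Pi.pow_apply]; ring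
  have i₄ := integrable (hu'_dec.bounded_mul hhb)
    ((continuousOn_of_radial_eq hu hV.continuousOn heq).mul
      (hu.continuousOn_deriv_of_isOpen isOpen_Ioi (by norm_num)))
    2 (F := fun r => r ^ 2 * deriv u r * h r) fun x => by simp only [Pi.mul_apply]; ring
  have hF : IsExpDecaying fun r => V r * u r ^ 2 - deriv u r ^ 2 - α / 2 * u r ^ 4 :=
    (((hu_dec.pow two_ne_zero).bounded_mul hVb).sub (hu'_dec.pow two_ne_zero)).sub
      ((hu_dec.pow four_ne_zero).const_mul _)
  have i₁₂₃ : IntegrableOn (fun x => 2 * (x * V x * u x ^ 2) + x ^ 2 * deriv V x * u x ^ 2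
      - α * (x * u x ^ 4)) (Ioi 0) :=
    ((i₁.const_mul 2).add i₂).sub (i₃.const_mul α)
  have hzero := hF.integral_eq_zero_of_hasDerivAt_pow_mul two_ne_zero
    (fun x hx => hasDerivAt_pohozaev_of_radial_eq hu hV heq hx) (i₁₂₃.fun_add (i₄.const_mul 2))
  rw [integral_add i₁₂₃ (i₄.const_mul 2), integral_sub ((i₁.const_mul 2).fun_add i₂)
    (i₃.const_mul α), integral_add (i₁.const_mul 2) i₂, integral_const_mul, integral_const_mul,
    integral_const_mul] at hzero
  linarith

end RadialEquation

theorem radial_pohozaev_u_general (lam α β : ℝ) (P u v : ℝ → ℝ)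
    (hP : ContDiffOn ℝ 1 P (Set.Ici 0))
    (hPbdd : ∃ C : ℝ, ∀ r ≥ (0:ℝ), |P r| ≤ C ∧ |deriv P r| ≤ C)
    (hu : ContDiffOn ℝ 2 u (Set.Ici 0))
    (hueq : ∀ r > (0:ℝ), -(deriv (deriv u) r) - deriv u r / r + (lam + P r) * u r
      = α * (u r) ^ 3 + β * u r * (v r) ^ 2)
    (hdecay : ∃ C > (0:ℝ), ∃ η > (0:ℝ), ∀ r ≥ (0:ℝ),
      |u r| + |deriv u r| + |v r| + |deriv v r| ≤ C * Real.exp (-η * r)) :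
    2 * (∫ r in Set.Ioi (0:ℝ), r * (lam + P r) * (u r) ^ 2)
      = α * (∫ r in Set.Ioi (0:ℝ), r * (u r) ^ 4)
        - (∫ r in Set.Ioi (0:ℝ), r ^ 2 * deriv P r * (u r) ^ 2)
        - β * ∫ r in Set.Ioi (0:ℝ), r ^ 2 * (2 * u r * deriv u r * (v r) ^ 2) := by
  obtain ⟨C, -, η, hη, hdecay⟩ := hdecay
  obtain ⟨M, hM⟩ := hPbdd
  have decaying {f : ℝ → ℝ} (hf : ∀ r, |f r| ≤ |u r| + |deriv u r| + |v r| + |deriv v r|) :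
      IsExpDecaying f :=
    .of_abs_le hη fun r hr => (hf r).trans (hdecay r hr)
  have hu_dec : IsExpDecaying u := decaying fun r => by
    linarith [abs_nonneg (deriv u r), abs_nonneg (v r), abs_nonneg (deriv v r)]
  have hu'_dec : IsExpDecaying (deriv u) := decaying fun r => by
    linarith [abs_nonneg (u r), abs_nonneg (v r), abs_nonneg (deriv v r)]
  have hv_dec : IsExpDecaying v := decaying fun r => by
    linarith [abs_nonneg (u r), abs_nonneg (deriv u r), abs_nonneg (deriv v r)]
  have hPb : P =O[𝓟 (Ici 0)] fun _ => (1 : ℝ) :=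
    isBigO_principal.2 ⟨M, fun r hr => by simpa using (hM r hr).1⟩
  have hP'b : deriv P =O[𝓟 (Ici 0)] fun _ => (1 : ℝ) :=
    isBigO_principal.2 ⟨M, fun r hr => by simpa using (hM r hr).2⟩
  have key := integral_radial_pohozaev (V := fun r => lam + P r)
    (h := fun r => β * u r * v r ^ 2) (hu.mono Ioi_subset_Ici_self)
    ((contDiffOn_const.add hP).mono Ioi_subset_Ici_self)
    ((isBigO_const_const lam one_ne_zero _).add hPb) (by rwa [deriv_const_add'])
    (((hu_dec.mul (hv_dec.pow two_ne_zero)).isBigO_one.const_mul_left β).congr_left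
      fun r => by simp only [Pi.mul_apply, Pi.pow_apply]; ring)
    hu_dec hu'_dec hueq
  rw [key, deriv_const_add']
  congr 1
  rw [← integral_const_mul, ← integral_const_mul]
  congr 1 with r
  ring

theorem radial_pohozaev_u (lam α β γ : ℝ) (P Q u v : ℝ → ℝ)
    (hP : ContDiffOn ℝ 1 P (Set.Ici 0)) (hQ : ContDiffOn ℝ 1 Q (Set.Ici 0))
    (hPbdd : ∃ C : ℝ, ∀ r ≥ (0:ℝ), |P r| ≤ C ∧ |deriv P r| ≤ C)
    (hQbdd : ∃ C : ℝ, ∀ r ≥ (0:ℝ), |Q r| ≤ C ∧ |deriv Q r| ≤ C)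
    (hu : ContDiffOn ℝ 2 u (Set.Ici 0)) (hv : ContDiffOn ℝ 2 v (Set.Ici 0))
    (hu0 : deriv u 0 = 0) (hv0 : deriv v 0 = 0)
    (hueq : ∀ r > (0:ℝ), -(deriv (deriv u) r) - deriv u r / r + (lam + P r) * u r
      = α * (u r) ^ 3 + β * u r * (v r) ^ 2)
    (hveq : ∀ r > (0:ℝ), -(deriv (deriv v) r) - deriv v r / r + (lam + Q r) * v r
      = γ * (v r) ^ 3 + β * (u r) ^ 2 * v r)
    (hdecay : ∃ C > (0:ℝ), ∃ η > (0:ℝ), ∀ r ≥ (0:ℝ),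
      |u r| + |deriv u r| + |v r| + |deriv v r| ≤ C * Real.exp (-η * r)) :
    2 * (∫ r in Set.Ioi (0:ℝ), r * (lam + P r) * (u r) ^ 2)
      = α * (∫ r in Set.Ioi (0:ℝ), r * (u r) ^ 4)
        - (∫ r in Set.Ioi (0:ℝ), r ^ 2 * deriv P r * (u r) ^ 2)
        - β * ∫ r in Set.Ioi (0:ℝ), r ^ 2 * (2 * u r * deriv u r * (v r) ^ 2) :=
  radial_pohozaev_u_general lam α β P u v hP hPbdd hu hueq hdecay
end
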